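/- arXiv:2604.25811 — 2 statements merged into one kernel-verified Lean document; each statement's English description precedes it below -/
import Mathlib

section
/- For all integers n ≥ 8, the tortoise complexity of the regular paperfolding word satisfies ρ^t_f(n) = 4n. -/
/-- The tortoise operation on binary words: if the word contains a 1 (`true`),
delete the first occurrence of 1 and append a 1 at the right end; otherwise do nothing. -/
def tortoise (w : List Bool) : List Bool :=
  if true ∈ w then (w.erase true) ++ [true] else w

/-- `w` is a factor (subword) of the infinite word `x`. -/
def IsFactor (x : ℕ → Bool) (w : List Bool) : Prop :=
  ∃ i, w = (List.range w.length).map (fun t => x (i + t))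

/-- The set of length-`n` factors of `x`. -/
def factorSet (x : ℕ → Bool) (n : ℕ) : Set (List Bool) :=
  {w | w.length = n ∧ IsFactor x w}

/-- The factor complexity of `x`. -/
noncomputable def rho (x : ℕ → Bool) (n : ℕ) : ℕ :=
  (factorSet x n).ncard

/-- The tortoise complexity of `x`: the number of `∼ₜ`-equivalence classes of
length-`n` factors of `x`, i.e. the number of distinct images under `tortoise`. -/
noncomputable def rhoTort (x : ℕ → Bool) (n : ℕ) : ℕ :=
  (tortoise '' factorSet x n).ncard

/-- The `k`-tortoise complexity of `x`: the number of equivalence classes of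
length-`n` factors of `x` under `tortoise^[k] w = tortoise^[k] v`. -/
noncomputable def rhoTortK (k : ℕ) (x : ℕ → Bool) (n : ℕ) : ℕ :=
  ((tortoise^[k]) '' factorSet x n).ncard

/-- `y` is a left special factor of `x`: both `0y` and `1y` are factors of `x`. -/
def LeftSpecial (x : ℕ → Bool) (y : List Bool) : Prop :=
  IsFactor x (false :: y) ∧ IsFactor x (true :: y)

/-- The Thue–Morse sequence: `tm n` is the parity of the number of 1's in the
binary expansion of `n` (`true` = 1). -/
def tm (n : ℕ) : Bool :=
  decide ((Nat.digits 2 n).sum % 2 = 1)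

/-- The regular paperfolding sequence, reindexed so that `pf m = f_{m+1}`:
writing `m + 1 = n' * 2^k` with `n'` odd, `pf m = true` iff `n' ≡ 3 (mod 4)`. -/
def pf (m : ℕ) : Bool :=
  decide ((m + 1) / 2 ^ (padicValNat 2 (m + 1)) % 4 = 3)

/-!
Write a start position as `2 * j + r`. Since `pf (2 * t) = t % 2` and `pf (2 * t + 1) = pf t`,
the factor of length `n` at `2 * j + r` interleaves a `2`-periodic pattern, fixed by the parity of
`j`, with the factor of length `(n + r) / 2` at `j`. Hence the factors starting at even and at odd
positions together number `4 * n`, and for `n ≥ 7` no factor starts at positions of both parities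
(a finite check at `n = 7`), so there are exactly `4 * n` factors of length `n`.

Every factor of length `4` contains a `1`, so on factors of length `n ≥ 8` the tortoise operation
only acts on the prefix of length `8` before appending a `1`: two factors with the same image
have the same suffix after position `8` and prefixes with the same image. Injectivity on factors
of length `8` is a finite check.
-/

lemma pf_two_mul (t : ℕ) : pf (2 * t) = decide (t % 2 = 1) := by
  have h : padicValNat 2 (2 * t + 1) = 0 := padicValNat.eq_zero_of_not_dvd (by omega)
  simp only [pf, h, pow_zero, Nat.div_one, decide_eq_decide]
  omega

lemma pf_two_mul_add_one (t : ℕ) : pf (2 * t + 1) = pf t := by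
  have h : padicValNat 2 (2 * (t + 1)) = padicValNat 2 (t + 1) + 1 := by
    rw [padicValNat.mul (by norm_num) (by omega), padicValNat.self (by norm_num), add_comm]
  rw [pf, pf, show 2 * t + 1 + 1 = 2 * (t + 1) by ring, h, pow_succ, mul_comm _ 2,
    ← Nat.div_div_eq_div_mul, Nat.mul_div_cancel_left _ (by norm_num)]

lemma exists_lt_four_pf_eq_true (i : ℕ) : ∃ t < 4, pf (i + t) = true := by
  refine ⟨(6 - i % 4) % 4, by omega, ?_⟩
  obtain ⟨s, hs⟩ : ∃ s, i + (6 - i % 4) % 4 = 2 * (2 * s + 1) :=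
    ⟨(i + (6 - i % 4) % 4) / 4, by omega⟩
  rw [hs, pf_two_mul]
  simp

def pfWindow (i n : ℕ) : List Bool := (List.range n).map fun t => pf (i + t)

@[simp] lemma length_pfWindow (i n : ℕ) : (pfWindow i n).length = n := by simp [pfWindow]

lemma pfWindow_getD {i n t : ℕ} (h : t < n) : (pfWindow i n).getD t false = pf (i + t) := by
  rw [List.getD_eq_getElem _ _ (by simpa using h)]
  simp [pfWindow]

lemma take_pfWindow {m n : ℕ} (i : ℕ) (h : m ≤ n) :
    (pfWindow i n).take m = pfWindow i m := by
  rw [pfWindow, ← List.map_take, List.take_range, min_eq_left h, pfWindow]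

def parityFactors (r n : ℕ) : Set (List Bool) := {w | ∃ i, i % 2 = r ∧ w = pfWindow i n}

lemma factorSet_pf (n : ℕ) : factorSet pf n = parityFactors 0 n ∪ parityFactors 1 n := by
  ext w
  constructor
  · rintro ⟨rfl, i, hw⟩
    rcases Nat.mod_two_eq_zero_or_one i with h | h
    exacts [Or.inl ⟨i, h, hw⟩, Or.inr ⟨i, h, hw⟩]
  · rintro (⟨i, -, rfl⟩ | ⟨i, -, rfl⟩) <;> exact ⟨length_pfWindow i n, i, by simp [pfWindow]⟩

lemma parityFactors_finite (r n : ℕ) : (parityFactors r n).Finite :=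
  (List.finite_length_eq Bool n).subset <| by rintro w ⟨i, -, rfl⟩; simp

/-- The shape of a window of `pf` starting at an absolute position of parity `r`: the letter at
absolute position `2 * s` is `b ^^ (s odd)`, the letter at `2 * s + 1` is read from `u`. -/
def interleave (r : ℕ) (b : Bool) (n : ℕ) (u : List Bool) : List Bool :=
  (List.range n).map fun t =>
    if (r + t) % 2 = 0 then xor b (decide ((r + t) / 2 % 2 = 1)) else u.getD ((r + t) / 2) false

@[simp] lemma length_interleave (r : ℕ) (b : Bool) (n : ℕ) (u : List Bool) :
    (interleave r b n u).length = n := by simp [interleave]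

lemma interleave_getD {r n t : ℕ} (b : Bool) (u : List Bool) (h : t < n) :
    (interleave r b n u).getD t false =
      if (r + t) % 2 = 0 then xor b (decide ((r + t) / 2 % 2 = 1))
      else u.getD ((r + t) / 2) false := by
  rw [List.getD_eq_getElem _ _ (by simpa using h)]
  simp [interleave]

lemma pfWindow_two_mul_add (r j n : ℕ) :
    pfWindow (2 * j + r) n = interleave r (decide (j % 2 = 1)) n (pfWindow j ((n + r) / 2)) := by
  refine List.ext_getElem (by simp) fun t h _ => ?_
  simp only [length_pfWindow] at h
  rw [← List.getD_eq_getElem _ false, ← List.getD_eq_getElem _ false, pfWindow_getD h,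
    interleave_getD _ _ h]
  split_ifs with ht
  · rw [show 2 * j + r + t = 2 * (j + (r + t) / 2) by omega, pf_two_mul]
    rcases Nat.mod_two_eq_zero_or_one j with hj | hj <;>
      rcases Nat.mod_two_eq_zero_or_one ((r + t) / 2) with hs | hs <;> simp [Nat.add_mod, hj, hs]
  · rw [pfWindow_getD (n := (n + r) / 2) (by omega),
      show 2 * j + r + t = 2 * (j + (r + t) / 2) + 1 by omega, pf_two_mul_add_one]

lemma parityFactors_eq_union {r : ℕ} (n : ℕ) (hr : r < 2) :
    parityFactors r n = interleave r false n '' parityFactors 0 ((n + r) / 2) ∪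
      interleave r true n '' parityFactors 1 ((n + r) / 2) := by
  ext w
  constructor
  · rintro ⟨i, hi, rfl⟩
    obtain ⟨j, rfl⟩ : ∃ j, i = 2 * j + r := ⟨i / 2, by omega⟩
    rw [pfWindow_two_mul_add]
    rcases Nat.mod_two_eq_zero_or_one j with hj | hj
    · exact Or.inl ⟨_, ⟨j, hj, rfl⟩, by simp [hj]⟩
    · exact Or.inr ⟨_, ⟨j, hj, rfl⟩, by simp [hj]⟩
  · rintro (⟨_, ⟨j, hj, rfl⟩, rfl⟩ | ⟨_, ⟨j, hj, rfl⟩, rfl⟩) <;>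
      exact ⟨2 * j + r, by omega, by simp [pfWindow_two_mul_add, hj]⟩

lemma interleave_injOn {r : ℕ} (b : Bool) (n : ℕ) (hr : r < 2) :
    Set.InjOn (interleave r b n) {u | u.length = (n + r) / 2} := by
  intro u (hu : u.length = _) u' (hu' : u'.length = _) heq
  refine List.ext_getElem (hu.trans hu'.symm) fun s hs hs' => ?_
  have hsn : 2 * s + 1 - r < n := by omega
  have := congrArg (fun l => l.getD (2 * s + 1 - r) false) heq
  simp only [interleave_getD _ _ hsn, if_neg (show ¬(r + (2 * s + 1 - r)) % 2 = 0 by omega),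
    show (r + (2 * s + 1 - r)) / 2 = s by omega] at this
  rwa [List.getD_eq_getElem _ _ hs, List.getD_eq_getElem _ _ hs'] at this

lemma interleave_disjoint {r n : ℕ} (hr : r < 2) (hn : 2 ≤ n) (s s' : Set (List Bool)) :
    Disjoint (interleave r false n '' s) (interleave r true n '' s') := by
  rw [Set.disjoint_left]
  rintro w ⟨u, -, rfl⟩ ⟨u', -, heq⟩
  have := congrArg (fun l => l.getD r false) heq
  simp only [interleave_getD _ _ (by omega : r < n), if_pos (show (r + r) % 2 = 0 by omega)] at this
  cases decide ((r + r) / 2 % 2 = 1) <;> simp at this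

lemma ncard_parityFactors_eq_add {r : ℕ} {n : ℕ} (hr : r < 2) (hn : 2 ≤ n) :
    (parityFactors r n).ncard =
      (parityFactors 0 ((n + r) / 2)).ncard + (parityFactors 1 ((n + r) / 2)).ncard := by
  have hsub : ∀ r', parityFactors r' ((n + r) / 2) ⊆ {u | u.length = (n + r) / 2} := by
    rintro r' _ ⟨i, -, rfl⟩
    exact length_pfWindow i _
  rw [parityFactors_eq_union n hr, Set.ncard_union_eq (interleave_disjoint hr hn _ _)
      ((parityFactors_finite _ _).image _) ((parityFactors_finite _ _).image _),
    ((interleave_injOn _ _ hr).mono (hsub 0)).ncard_image,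
    ((interleave_injOn _ _ hr).mono (hsub 1)).ncard_image]

lemma parityFactors_one {r : ℕ} (hr : r < 2) : parityFactors r 1 = {[false], [true]} := by
  have window_one (i : ℕ) : pfWindow i 1 = [pf i] := rfl
  ext w
  constructor
  · rintro ⟨i, -, rfl⟩
    cases pf i <;> simp [window_one]
  have pf_zero : pf 0 = false := by simpa using pf_two_mul 0
  have pf_two : pf 2 = true := by simpa using pf_two_mul 1
  rintro (rfl | rfl)
  · refine ⟨r, Nat.mod_eq_of_lt hr, ?_⟩
    interval_cases r
    · simp [window_one, pf_zero]
    · simp [window_one, ← pf_zero, ← pf_two_mul_add_one 0]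
  · refine ⟨2 + 3 * r, by omega, ?_⟩
    interval_cases r
    · simp [window_one, pf_two]
    · simp [window_one, ← pf_two, ← pf_two_mul_add_one 2]

lemma ncard_parityFactors_zero_add_ncard_one {n : ℕ} (hn : 1 ≤ n) :
    (parityFactors 0 n).ncard + (parityFactors 1 n).ncard = 4 * n := by
  induction n using Nat.strong_induction_on with
  | _ n ih =>
    obtain rfl | hn2 := hn.eq_or_lt
    · rw [parityFactors_one (by norm_num), parityFactors_one (by norm_num),
        Set.ncard_pair (by simp)]
    · have h₀ := ih (n / 2) (by omega) (by omega)
      have h₁ := ih ((n + 1) / 2) (by omega) (by omega)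
      rw [ncard_parityFactors_eq_add (by norm_num) hn2,
        ncard_parityFactors_eq_add (by norm_num) hn2, Nat.add_zero]
      omega

/-- The recursion depth `k` makes this evaluable by `decide`; the list is exact once
`n ≤ 2 ^ k`. -/
def parityFactorList : ℕ → ℕ → ℕ → List (List Bool)
  | 0, _, _ => [[false], [true]]
  | k + 1, r, n =>
    if n ≤ 1 then [[false], [true]]
    else (parityFactorList k 0 ((n + r) / 2)).map (interleave r false n) ++
      (parityFactorList k 1 ((n + r) / 2)).map (interleave r true n)

lemma parityFactors_eq_parityFactorList {r n : ℕ} (k : ℕ) (hr : r < 2) (hn : 1 ≤ n)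
    (hnk : n ≤ 2 ^ k) : parityFactors r n = {w | w ∈ parityFactorList k r n} := by
  induction k generalizing r n with
  | zero =>
    obtain rfl : n = 1 := by simp at hnk; omega
    ext w
    simp [parityFactors_one hr, parityFactorList]
  | succ k ih =>
    obtain rfl | hn2 := hn.eq_or_lt
    · ext w
      simp [parityFactors_one hr, parityFactorList]
    · have hm : 1 ≤ (n + r) / 2 ∧ (n + r) / 2 ≤ 2 ^ k := by rw [pow_succ] at hnk; omega
      rw [parityFactors_eq_union n hr, ih (by norm_num) hm.1 hm.2, ih (by norm_num) hm.1 hm.2]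
      ext w
      simp [parityFactorList, show ¬n ≤ 1 by omega]

lemma parityFactorList_seven_disjoint :
    ∀ w ∈ parityFactorList 3 0 7, w ∉ parityFactorList 3 1 7 := by
  decide

lemma nodup_map_tortoise_parityFactorList_eight :
    ((parityFactorList 3 0 8 ++ parityFactorList 3 1 8).map tortoise).Nodup := by
  decide

lemma take_mem_parityFactors {r m n : ℕ} {w : List Bool} (hw : w ∈ parityFactors r n)
    (h : m ≤ n) : w.take m ∈ parityFactors r m := by
  obtain ⟨i, hi, rfl⟩ := hw
  exact ⟨i, hi, take_pfWindow i h⟩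

lemma disjoint_parityFactors {n : ℕ} (hn : 7 ≤ n) :
    Disjoint (parityFactors 0 n) (parityFactors 1 n) := by
  have list_eq (r : ℕ) (hr : r < 2) := parityFactors_eq_parityFactorList (n := 7) 3 hr
    (by norm_num) (by norm_num)
  refine Set.disjoint_left.2 fun w h₀ h₁ => ?_
  have h₀ := list_eq 0 (by norm_num) ▸ take_mem_parityFactors h₀ hn
  have h₁ := list_eq 1 (by norm_num) ▸ take_mem_parityFactors h₁ hn
  exact parityFactorList_seven_disjoint _ h₀ h₁

lemma true_mem_pfWindow (i : ℕ) {n : ℕ} (hn : 4 ≤ n) : true ∈ pfWindow i n := by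
  obtain ⟨t, ht, hpf⟩ := exists_lt_four_pf_eq_true i
  exact List.mem_map.2 ⟨t, List.mem_range.2 (by omega), hpf⟩

lemma true_mem_of_mem_factorSet_pf {n : ℕ} {w : List Bool} (hn : 4 ≤ n)
    (hw : w ∈ factorSet pf n) : true ∈ w := by
  rw [factorSet_pf] at hw
  obtain ⟨i, -, rfl⟩ | ⟨i, -, rfl⟩ := hw <;> exact true_mem_pfWindow i hn

lemma take_mem_factorSet {x : ℕ → Bool} {m n : ℕ} {w : List Bool} (hw : w ∈ factorSet x n)
    (h : m ≤ n) : w.take m ∈ factorSet x m := by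
  obtain ⟨rfl, i, hw⟩ := hw
  refine ⟨by simp [h], i, ?_⟩
  rw [List.length_take_of_le h]
  nth_rewrite 1 [hw]
  rw [← List.map_take, List.take_range, min_eq_left h]

lemma factorSet_pf_eq_parityFactorList {n : ℕ} (k : ℕ) (hn : 1 ≤ n) (hnk : n ≤ 2 ^ k) :
    factorSet pf n = {w | w ∈ parityFactorList k 0 n ++ parityFactorList k 1 n} := by
  rw [factorSet_pf, parityFactors_eq_parityFactorList k (by norm_num) hn hnk,
    parityFactors_eq_parityFactorList k (by norm_num) hn hnk]
  ext w
  simp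

lemma tortoise_take_eq_and_drop_eq {w v : List Bool} {m : ℕ} (hlen : w.length = v.length)
    (hw : true ∈ w.take m) (hv : true ∈ v.take m) (h : tortoise w = tortoise v) :
    tortoise (w.take m) = tortoise (v.take m) ∧ w.drop m = v.drop m := by
  rw [tortoise, tortoise, if_pos (List.mem_of_mem_take hw), if_pos (List.mem_of_mem_take hv),
    ← List.take_append_drop m w, ← List.take_append_drop m v, List.erase_append_left _ hw,
    List.erase_append_left _ hv] at h
  obtain ⟨herase, hdrop⟩ := List.append_inj (List.append_cancel_right h) <| by
    simp [List.length_erase_of_mem hw, List.length_erase_of_mem hv, hlen]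
  rw [tortoise, tortoise, if_pos hw, if_pos hv, herase]
  exact ⟨rfl, hdrop⟩

lemma tortoise_injOn_factorSet_pf {n : ℕ} (hn : 8 ≤ n) :
    Set.InjOn tortoise (factorSet pf n) := by
  intro w hw v hv h
  have hw₈ := take_mem_factorSet hw hn
  have hv₈ := take_mem_factorSet hv hn
  obtain ⟨htake, hdrop⟩ := tortoise_take_eq_and_drop_eq (hw.1.trans hv.1.symm)
    (true_mem_of_mem_factorSet_pf (by norm_num) hw₈)
    (true_mem_of_mem_factorSet_pf (by norm_num) hv₈) h
  rw [factorSet_pf_eq_parityFactorList 3 (by norm_num) (by norm_num)] at hw₈ hv₈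
  rw [← List.take_append_drop 8 w, ← List.take_append_drop 8 v, hdrop,
    List.inj_on_of_nodup_map nodup_map_tortoise_parityFactorList_eight hw₈ hv₈ htake]

/-- for all `n ≥ 8`, the tortoise complexity of the paperfolding word
satisfies `ρ^t_f(n) = 4n`. -/
theorem stmt_5 (n : ℕ) (hn : 8 ≤ n) : rhoTort pf n = 4 * n := by
  rw [rhoTort, (tortoise_injOn_factorSet_pf hn).ncard_image, factorSet_pf,
    Set.ncard_union_eq (disjoint_parityFactors (by omega)) (parityFactors_finite 0 n)
      (parityFactors_finite 1 n)]
  exact ncard_parityFactors_zero_add_ncard_one (by omega)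
end

section
/- Let n ≥ 11 be an integer and write the binary expansion of n − 3 as n − 3 = [b₁ b₂ ⋯ b_m]₂ (so b₁ = 1 and m = ⌊log₂(n−3)⌋ + 1). Define the length-n words counter₁(n) = t_{2^{m+1}−2} t_{2^{m+1}−1} ⋯ t_{2^{m+1}+n−3}, counter₂(n) = t_{2^{m+1}+2^{m−1}−2} ⋯ t_{2^{m+1}+2^{m−1}+n−3}, counter₃(n) = t_{2^{m+1}+2^{m−1}+2^{m−2}−2} ⋯ t_{2^{m+1}+2^{m−1}+2^{m−2}+n−3}, and counter₄(n) = t_{2^{m+1}+2^{m}−2} ⋯ t_{2^{m+1}+2^{m}+n−3}. Let w be a length-n factor of t. If b₁b₂ = 10 and there is a factor v ≠ w of t with v tortoise-equivalent to w, then w or v is equal to one of counter₁(n), counter₂(n), counter₃(n), counter₄(n). If b₁b₂ = 11 and there is a factor v ≠ w of t with v tortoise-equivalent to w, then w or v is equal to counter₁(n) or counter₄(n). -/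
/-- The length-`n` factor of `x` starting at position `i`. -/
def factorAt (x : ℕ → Bool) (i n : ℕ) : List Bool :=
  (List.range n).map (fun t => x (i + t))


/-! ### Basic facts about tm -/

lemma tm_zero : tm 0 = false := by simp [tm]

lemma tm_even (n : ℕ) : tm (2 * n) = tm n := by
  rcases Nat.eq_zero_or_pos n with h | h
  · subst h; rfl
  · unfold tm
    rw [Nat.digits_def' (by norm_num : (1:ℕ) < 2) (by omega : 0 < 2 * n)]
    simp [Nat.mul_div_cancel_left _ (by norm_num : (0:ℕ) < 2)]

lemma tm_odd (n : ℕ) : tm (2 * n + 1) = !(tm n) := by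
  unfold tm
  rw [Nat.digits_def' (by norm_num : (1:ℕ) < 2) (by omega : 0 < 2 * n + 1)]
  have h1 : (2 * n + 1) % 2 = 1 := by omega
  have h2 : (2 * n + 1) / 2 = n := by omega
  rw [h1, h2, List.sum_cons]
  rcases Nat.mod_two_eq_zero_or_one ((Nat.digits 2 n).sum) with h | h
  · simp [Nat.add_mod, h]
  · simp [Nat.add_mod, h]

lemma pair_ne (k : ℕ) : tm (2 * k) ≠ tm (2 * k + 1) := by
  rw [tm_even, tm_odd]
  cases tm k <;> simp

lemma no3 (k : ℕ) : tm k ≠ tm (k + 1) ∨ tm (k + 1) ≠ tm (k + 2) := by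
  rcases Nat.even_or_odd k with ⟨c, hc⟩ | ⟨c, hc⟩
  · left
    have h := pair_ne c
    rwa [show 2 * c + 1 = k + 1 by omega, show 2 * c = k by omega] at h
  · right
    have h := pair_ne (c + 1)
    rwa [show 2 * (c + 1) + 1 = k + 2 by omega, show 2 * (c + 1) = k + 1 by omega] at h

lemma tm_vals : tm 8 = true ∧ tm 9 = false ∧ tm 10 = false ∧ tm 11 = true ∧
    tm 12 = false ∧ tm 13 = true ∧ tm 14 = true ∧ tm 15 = false := by
  have t1 : tm 1 = true := by have := tm_odd 0; rw [tm_zero] at this; simpa using this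
  have t2 : tm 2 = true := by have := tm_even 1; rw [t1] at this; simpa using this
  have t3 : tm 3 = false := by have := tm_odd 1; rw [t1] at this; simpa using this
  have t4 : tm 4 = true := by have := tm_even 2; rw [t2] at this; simpa using this
  have t5 : tm 5 = false := by have := tm_odd 2; rw [t2] at this; simpa using this
  have t6 : tm 6 = false := by have := tm_even 3; rw [t3] at this; simpa using this
  have t7 : tm 7 = true := by have := tm_odd 3; rw [t3] at this; simpa using this
  refine ⟨?_, ?_, ?_, ?_, ?_, ?_, ?_, ?_⟩
  · have := tm_even 4; rw [t4] at this; simpa using this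
  · have := tm_odd 4; rw [t4] at this; simpa using this
  · have := tm_even 5; rw [t5] at this; simpa using this
  · have := tm_odd 5; rw [t5] at this; simpa using this
  · have := tm_even 6; rw [t6] at this; simpa using this
  · have := tm_odd 6; rw [t6] at this; simpa using this
  · have := tm_even 7; rw [t7] at this; simpa using this
  · have := tm_odd 7; rw [t7] at this; simpa using this

lemma tm_block (e : ℕ) : ∀ j r : ℕ, r < 2 ^ e → tm (2 ^ e * j + r) = xor (tm j) (tm r) := by
  induction e with
  | zero =>
    intro j r hr
    interval_cases r
    simp [tm_zero]
  | succ e ih =>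
    intro j r hr
    have h2e : (2:ℕ) ^ (e + 1) = 2 * 2 ^ e := by ring
    have hx : 2 ^ (e + 1) * j = 2 * (2 ^ e * j) := by ring
    rcases Nat.even_or_odd r with ⟨r', hr'⟩ | ⟨r', hr'⟩
    · have hrs : r' < 2 ^ e := by omega
      have h1 : 2 ^ (e + 1) * j + r = 2 * (2 ^ e * j + r') := by omega
      have h2 : r = 2 * r' := by omega
      rw [h1, tm_even, ih j r' hrs, h2, tm_even]
    · have hrs : r' < 2 ^ e := by omega
      have h1 : 2 ^ (e + 1) * j + r = 2 * (2 ^ e * j + r') + 1 := by omega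
      have h2 : r = 2 * r' + 1 := by omega
      rw [h1, tm_odd, ih j r' hrs, h2, tm_odd]
      cases tm j <;> cases tm r' <;> rfl

lemma tm_split (e K r : ℕ) : tm (2 ^ e * K + r) = xor (tm (K + r / 2 ^ e)) (tm (r % 2 ^ e)) := by
  have h : 2 ^ e * K + r = 2 ^ e * (K + r / 2 ^ e) + r % 2 ^ e := by
    rw [Nat.mul_add]
    rw [Nat.add_assoc, Nat.div_add_mod]
  rw [h, tm_block e _ _ (Nat.mod_lt _ (by positivity))]
/-! ### Synchronization and left-special recursion -/

lemma sync (L i j : ℕ) (hL : 5 ≤ L) (h : ∀ r < L, tm (i + r) = tm (j + r))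
    (hi : i % 2 = 0) (hj : j % 2 = 1) : False := by
  obtain ⟨c, hc⟩ : ∃ c, i = 2 * c := ⟨i / 2, by omega⟩
  obtain ⟨d, hd⟩ : ∃ d, j = 2 * d + 1 := ⟨j / 2, by omega⟩
  have h01 : tm (i + 0) ≠ tm (i + 1) := by
    have hp := pair_ne c
    rwa [show 2 * c + 1 = i + 1 by omega, show 2 * c = i + 0 by omega] at hp
  have h23 : tm (i + 2) ≠ tm (i + 3) := by
    have hp := pair_ne (c + 1)
    rwa [show 2 * (c + 1) + 1 = i + 3 by omega, show 2 * (c + 1) = i + 2 by omega] at hp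
  have h12 : tm (i + 1) ≠ tm (i + 2) := by
    have hp := pair_ne (d + 1)
    rw [show 2 * (d + 1) + 1 = j + 2 by omega, show 2 * (d + 1) = j + 1 by omega] at hp
    rwa [← h 1 (by omega), ← h 2 (by omega)] at hp
  have h34 : tm (i + 3) ≠ tm (i + 4) := by
    have hp := pair_ne (d + 2)
    rw [show 2 * (d + 2) + 1 = j + 4 by omega, show 2 * (d + 2) = j + 3 by omega] at hp
    rwa [← h 3 (by omega), ← h 4 (by omega)] at hp
  have p0 : tm c = tm (i + 0) := by rw [show i + 0 = 2 * c by omega, tm_even]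
  have p1 : tm (c + 1) = tm (i + 2) := by rw [show i + 2 = 2 * (c + 1) by omega, tm_even]
  have p2 : tm (c + 2) = tm (i + 4) := by rw [show i + 4 = 2 * (c + 2) by omega, tm_even]
  rcases no3 c with hq | hq
  · apply hq
    rw [p0, p1]
    cases hb0 : tm (i + 0) <;> cases hb1 : tm (i + 1) <;> cases hb2 : tm (i + 2) <;> simp_all
  · apply hq
    rw [p1, p2]
    cases hb2 : tm (i + 2) <;> cases hb3 : tm (i + 3) <;> cases hb4 : tm (i + 4) <;> simp_all

def LSpt (i j L : ℕ) : Prop := tm i ≠ tm j ∧ ∀ r < L, tm (i + 1 + r) = tm (j + 1 + r)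

lemma lspt_step (i j L : ℕ) (hL : 5 ≤ L) (h : LSpt i j L) :
    ∃ i' j', i = 2 * i' + 1 ∧ j = 2 * j' + 1 ∧ LSpt i' j' ((L + 1) / 2) := by
  obtain ⟨hne, hw⟩ := h
  rcases Nat.even_or_odd i with ⟨c, hc⟩ | ⟨c, hc⟩
  · rcases Nat.even_or_odd j with ⟨d, hd⟩ | ⟨d, hd⟩
    · exfalso
      have hI : tm (i + 1) = !(tm i) := by
        rw [show i + 1 = 2 * c + 1 by omega, tm_odd, show i = 2 * c by omega, tm_even]
      have hJ : tm (j + 1) = !(tm j) := by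
        rw [show j + 1 = 2 * d + 1 by omega, tm_odd, show j = 2 * d by omega, tm_even]
      have h0 := hw 0 (by omega)
      simp only [Nat.add_zero] at h0
      rw [hI, hJ] at h0
      apply hne
      cases hx : tm i <;> cases hy : tm j <;> simp_all
    · exact absurd (sync L (j + 1) (i + 1) hL (fun r hr => (hw r hr).symm) (by omega) (by omega)) not_false
  · rcases Nat.even_or_odd j with ⟨d, hd⟩ | ⟨d, hd⟩
    · exact absurd (sync L (i + 1) (j + 1) hL hw (by omega) (by omega)) not_false
    · refine ⟨c, d, by omega, by omega, ?_, ?_⟩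
      · have hIc : tm i = !(tm c) := by rw [show i = 2 * c + 1 by omega, tm_odd]
        have hJd : tm j = !(tm d) := by rw [show j = 2 * d + 1 by omega, tm_odd]
        intro hcd
        apply hne
        rw [hIc, hJd, hcd]
      · intro r hr
        have h2r : 2 * r < L := by omega
        have hh := hw (2 * r) h2r
        rwa [show i + 1 + 2 * r = 2 * (c + 1 + r) by omega,
          show j + 1 + 2 * r = 2 * (d + 1 + r) by omega, tm_even, tm_even] at hh

lemma lspt_main (L : ℕ) (h3 : 3 ≤ L) : ∀ i j, LSpt i j L →
    ∃ e i' j' L', i + 1 = 2 ^ e * (i' + 1) ∧ j + 1 = 2 ^ e * (j' + 1) ∧ LSpt i' j' L' ∧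
      (L' = 3 ∨ L' = 4) ∧ L ≤ L' * 2 ^ e ∧ 2 ^ e * (L' - 1) < L := by
  induction L using Nat.strong_induction_on with
  | _ L IH =>
    intro i j h
    by_cases hL : L ≤ 4
    · exact ⟨0, i, j, L, by simp, by simp, h, by omega, by simp, by simp; omega⟩
    · obtain ⟨c, d, hc, hd, hstep⟩ := lspt_step i j L (by omega) h
      obtain ⟨e, i', j', L', hie, hje, hbase, hL34, hA, hB⟩ :=
        IH ((L + 1) / 2) (by omega) (by omega) c d hstep
      refine ⟨e + 1, i', j', L', ?_, ?_, hbase, hL34, ?_, ?_⟩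
      · have hx : (2:ℕ) ^ (e + 1) * (i' + 1) = 2 * (2 ^ e * (i' + 1)) := by ring
        omega
      · have hx : (2:ℕ) ^ (e + 1) * (j' + 1) = 2 * (2 ^ e * (j' + 1)) := by ring
        omega
      · have hx : L' * 2 ^ (e + 1) = 2 * (L' * 2 ^ e) := by ring
        omega
      · have hx : (2:ℕ) ^ (e + 1) * (L' - 1) = 2 * (2 ^ e * (L' - 1)) := by ring
        omega

lemma ne2 (i j L : ℕ) (hL : 2 ≤ L) (h : LSpt i j L) : tm (i + 1) ≠ tm (i + 2) := by
  obtain ⟨hne, hw⟩ := h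
  rcases Nat.even_or_odd i with ⟨c, hc⟩ | ⟨c, hc⟩
  · rcases Nat.even_or_odd j with ⟨d, hd⟩ | ⟨d, hd⟩
    · exfalso
      have hI : tm (i + 1) = !(tm i) := by
        rw [show i + 1 = 2 * c + 1 by omega, tm_odd, show i = 2 * c by omega, tm_even]
      have hJ : tm (j + 1) = !(tm j) := by
        rw [show j + 1 = 2 * d + 1 by omega, tm_odd, show j = 2 * d by omega, tm_even]
      have h0 := hw 0 (by omega)
      simp only [Nat.add_zero] at h0
      rw [hI, hJ] at h0
      apply hne
      cases hx : tm i <;> cases hy : tm j <;> simp_all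
    · have hp := pair_ne (d + 1)
      rw [show 2 * (d + 1) + 1 = j + 2 by omega, show 2 * (d + 1) = j + 1 by omega] at hp
      have e1 := hw 0 (by omega)
      have e2 := hw 1 (by omega)
      simp only [Nat.add_zero] at e1
      rw [show i + 1 + 1 = i + 2 by omega, show j + 1 + 1 = j + 2 by omega] at e2
      rw [e1, e2]
      exact hp
  · have hp := pair_ne (c + 1)
    rwa [show 2 * (c + 1) + 1 = i + 2 by omega, show 2 * (c + 1) = i + 1 by omega] at hp

lemma bool_flip {a b : Bool} (h : a ≠ b) : b = !a := by
  cases a <;> cases b <;> simp_all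

lemma base4 (i j : ℕ) (h : LSpt i j 4) :
    tm (i + 2) = !(tm (i + 1)) ∧ tm (i + 3) = !(tm (i + 1)) ∧ tm (i + 4) = tm (i + 1) := by
  have h2 : tm (i + 2) = !(tm (i + 1)) := bool_flip (ne2 i j 4 (by omega) h)
  obtain ⟨hne, hw⟩ := h
  have e0 : tm (i + 1) = tm (j + 1) := by simpa using hw 0 (by omega)
  have e1 : tm (i + 2) = tm (j + 2) := by
    have hh := hw 1 (by omega)
    rwa [show i + 1 + 1 = i + 2 by omega, show j + 1 + 1 = j + 2 by omega] at hh
  have e2 : tm (i + 3) = tm (j + 3) := by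
    have hh := hw 2 (by omega)
    rwa [show i + 1 + 2 = i + 3 by omega, show j + 1 + 2 = j + 3 by omega] at hh
  have e3 : tm (i + 4) = tm (j + 4) := by
    have hh := hw 3 (by omega)
    rwa [show i + 1 + 3 = i + 4 by omega, show j + 1 + 3 = j + 4 by omega] at hh
  rcases Nat.even_or_odd i with ⟨c, hc⟩ | ⟨c, hc⟩
  · rcases Nat.even_or_odd j with ⟨d, hd⟩ | ⟨d, hd⟩
    · -- both i, j even: impossible
      exfalso
      have hI : tm (i + 1) = !(tm i) := by
        rw [show i + 1 = 2 * c + 1 by omega, tm_odd, show i = 2 * c by omega, tm_even]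
      have hJ : tm (j + 1) = !(tm j) := by
        rw [show j + 1 = 2 * d + 1 by omega, tm_odd, show j = 2 * d by omega, tm_even]
      apply hne
      rw [hI, hJ] at e0
      cases hx : tm i <;> cases hy : tm j <;> simp_all
    · -- i even, j odd: impossible
      exfalso
      have hp1 := pair_ne (c + 1)
      rw [show 2 * (c + 1) + 1 = i + 3 by omega, show 2 * (c + 1) = i + 2 by omega] at hp1
      rw [h2] at hp1
      have hz : tm (i + 3) = tm (i + 1) := by
        have := bool_flip hp1
        rw [this]
        cases tm (i + 1) <;> rfl
      have hp2 := pair_ne (d + 2)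
      rw [show 2 * (d + 2) + 1 = j + 4 by omega, show 2 * (d + 2) = j + 3 by omega] at hp2
      rw [← e2, hz] at hp2
      have hu : tm (i + 4) = !(tm (i + 1)) := by rw [e3]; exact bool_flip hp2
      have hp0 := pair_ne c
      rw [show 2 * c + 1 = i + 1 by omega] at hp0
      have p0 : tm c = !(tm (i + 1)) := by
        have hh : tm c = tm (2 * c) := (tm_even c).symm
        rw [hh, show 2 * c = i by omega]
        have := bool_flip hp0.symm
        rw [show 2 * c = i by omega] at this
        exact this
      have p1 : tm (c + 1) = !(tm (i + 1)) := by
        have hh : tm (c + 1) = tm (i + 2) := by rw [show i + 2 = 2 * (c + 1) by omega, tm_even]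
        rw [hh, h2]
      have p2 : tm (c + 2) = !(tm (i + 1)) := by
        have hh : tm (c + 2) = tm (i + 4) := by rw [show i + 4 = 2 * (c + 2) by omega, tm_even]
        rw [hh, hu]
      rcases no3 c with hq | hq
      · exact hq (by rw [p0, p1])
      · exact hq (by rw [p1, p2])
  · rcases Nat.even_or_odd j with ⟨d, hd⟩ | ⟨d, hd⟩
    · -- i odd, j even: impossible
      exfalso
      have hp1 := pair_ne (d + 1)
      rw [show 2 * (d + 1) + 1 = j + 3 by omega, show 2 * (d + 1) = j + 2 by omega] at hp1
      rw [← e1, h2] at hp1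
      have hz : tm (j + 3) = tm (i + 1) := by
        have := bool_flip hp1
        rw [this]
        cases tm (i + 1) <;> rfl
      have hp2 := pair_ne (c + 2)
      rw [show 2 * (c + 2) + 1 = i + 4 by omega, show 2 * (c + 2) = i + 3 by omega] at hp2
      rw [e2, hz] at hp2
      have hu : tm (i + 4) = !(tm (i + 1)) := bool_flip hp2
      have hp0 := pair_ne d
      rw [show 2 * d + 1 = j + 1 by omega] at hp0
      rw [← e0] at hp0
      have p0 : tm d = !(tm (i + 1)) := by
        have hh : tm d = tm (2 * d) := (tm_even d).symm
        rw [hh]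
        exact bool_flip hp0.symm
      have p1 : tm (d + 1) = !(tm (i + 1)) := by
        have hh : tm (d + 1) = tm (j + 2) := by rw [show j + 2 = 2 * (d + 1) by omega, tm_even]
        rw [hh, ← e1, h2]
      have p2 : tm (d + 2) = !(tm (i + 1)) := by
        have hh : tm (d + 2) = tm (j + 4) := by rw [show j + 4 = 2 * (d + 2) by omega, tm_even]
        rw [hh, ← e3, hu]
      rcases no3 d with hq | hq
      · exact hq (by rw [p0, p1])
      · exact hq (by rw [p1, p2])
    · -- both odd: the real case
      have hp2 := pair_ne (c + 2)
      rw [show 2 * (c + 2) + 1 = i + 4 by omega, show 2 * (c + 2) = i + 3 by omega] at hp2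
      have hz : tm (i + 3) = !(tm (i + 1)) := by
        by_contra hzc
        have hz2 : tm (i + 3) = tm (i + 1) := by
          cases hx : tm (i + 1) <;> cases hy : tm (i + 3) <;> simp_all
        have hIc : tm i = !(tm c) := by rw [show i = 2 * c + 1 by omega, tm_odd]
        have hJd : tm j = !(tm d) := by rw [show j = 2 * d + 1 by omega, tm_odd]
        have q1 : tm (c + 1) = tm (i + 1) := by rw [show i + 1 = 2 * (c + 1) by omega, tm_even]
        have q2 : tm (c + 2) = tm (i + 3) := by rw [show i + 3 = 2 * (c + 2) by omega, tm_even]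
        have q1' : tm (d + 1) = tm (j + 1) := by rw [show j + 1 = 2 * (d + 1) by omega, tm_even]
        have q2' : tm (d + 2) = tm (j + 3) := by rw [show j + 3 = 2 * (d + 2) by omega, tm_even]
        have hcd : tm c ≠ tm d := by
          intro hcd
          apply hne
          rw [hIc, hJd, hcd]
        have hls : LSpt c d 2 := by
          refine ⟨hcd, ?_⟩
          intro r hr
          interval_cases r
          · simp only [Nat.add_zero]
            rw [q1, q1', e0]
          · rw [show c + 1 + 1 = c + 2 by omega, show d + 1 + 1 = d + 2 by omega, q2, q2', e2]
        have hne2 := ne2 c d 2 (by omega) hls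
        apply hne2
        rw [q1, q2, hz2]
      refine ⟨h2, hz, ?_⟩
      rw [hz] at hp2
      have := bool_flip hp2
      rw [this]
      cases tm (i + 1) <;> rfl
/-! ### Killing the impossible shapes -/

lemma killB (n a b : ℕ) (hn : 11 ≤ n)
    (ha1 : tm (a + 1) = false) (ha2 : tm (a + 2) = false)
    (hb0 : tm b = false) (hb1 : tm (b + 1) = false)
    (heq : ∀ r < n - 3, tm (a + 3 + r) = tm (b + 3 + r)) : False := by
  have hao : (a + 1) % 2 = 1 := by
    rcases Nat.even_or_odd (a + 1) with ⟨c, hc⟩ | ⟨c, hc⟩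
    · exfalso
      have hp := pair_ne c
      rw [show 2 * c + 1 = a + 2 by omega, show 2 * c = a + 1 by omega] at hp
      rw [ha1, ha2] at hp
      exact hp rfl
    · omega
  have hbo : b % 2 = 1 := by
    rcases Nat.even_or_odd b with ⟨c, hc⟩ | ⟨c, hc⟩
    · exfalso
      have hp := pair_ne c
      rw [show 2 * c + 1 = b + 1 by omega, show 2 * c = b by omega] at hp
      rw [hb0, hb1] at hp
      exact hp rfl
    · omega
  exact sync (n - 3) (b + 3) (a + 3) (by omega) (fun r hr => (heq r hr).symm)
    (by omega) (by omega)

lemma killC (n a b : ℕ) (hn : 11 ≤ n)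
    (ha0 : tm a = false) (ha1 : tm (a + 1) = true)
    (hb0 : tm b = false) (hb1 : tm (b + 1) = false)
    (heq : ∀ r < n - 3, tm (a + 3 + r) = tm (b + 3 + r)) : False := by
  have hbo : b % 2 = 1 := by
    rcases Nat.even_or_odd b with ⟨c, hc⟩ | ⟨c, hc⟩
    · exfalso
      have hp := pair_ne c
      rw [show 2 * c + 1 = b + 1 by omega, show 2 * c = b by omega] at hp
      rw [hb0, hb1] at hp
      exact hp rfl
    · omega
  have hao : a % 2 = 1 := by
    rcases Nat.even_or_odd a with ⟨c, hc⟩ | ⟨c, hc⟩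
    · exact absurd (sync (n - 3) (b + 3) (a + 3) (by omega)
        (fun r hr => (heq r hr).symm) (by omega) (by omega)) not_false
    · omega
  obtain ⟨A, hA⟩ : ∃ A, a = 2 * A + 1 := ⟨a / 2, by omega⟩
  obtain ⟨B, hB⟩ : ∃ B, b = 2 * B + 1 := ⟨b / 2, by omega⟩
  have hA1 : tm (A + 1) = true := by
    have hh := tm_even (A + 1)
    rw [show 2 * (A + 1) = a + 1 by omega, ha1] at hh
    exact hh.symm
  have hB1 : tm (B + 1) = false := by
    have hh := tm_even (B + 1)
    rw [show 2 * (B + 1) = b + 1 by omega, hb1] at hh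
    exact hh.symm
  have hz : ∀ q, q < (n - 2) / 2 → tm (A + 2 + q) = tm (B + 2 + q) := by
    intro q hq
    have hh := heq (2 * q) (by omega)
    rwa [show a + 3 + 2 * q = 2 * (A + 2 + q) by omega,
      show b + 3 + 2 * q = 2 * (B + 2 + q) by omega, tm_even, tm_even] at hh
  rcases Nat.even_or_odd (A + 2) with ⟨γ, hγ⟩ | ⟨γ, hγ⟩
  · -- A+2 even ⇒ A even ⇒ block (A, A+1) = (true, true): contradiction
    have hp := pair_ne (γ - 1)
    rw [show 2 * (γ - 1) + 1 = A + 1 by omega, show 2 * (γ - 1) = A by omega] at hp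
    have hA0 : tm A = true := by
      have hh := tm_odd A
      rw [show 2 * A + 1 = a by omega, ha0] at hh
      cases hx : tm A
      · rw [hx] at hh; simp at hh
      · rfl
    rw [hA0, hA1] at hp
    exact hp rfl
  · -- A+2 = 2γ+1 odd
    have hz0 : tm (A + 2) = false := by
      have hp := pair_ne γ
      rw [show 2 * γ + 1 = A + 2 by omega, show 2 * γ = A + 1 by omega, hA1] at hp
      have := bool_flip hp
      rw [this]; rfl
    rcases Nat.even_or_odd (B + 2) with ⟨ε, hε⟩ | ⟨ε, hε⟩
    · -- B+2 even: mixed parity: alternation forces no3 contradiction in preimage of A side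
      have e00 : tm (A + 2) = tm (B + 2) := by simpa using hz 0 (by omega)
      have e01 : tm (A + 3) = tm (B + 3) := by
        have hh := hz 1 (by omega)
        rwa [show A + 2 + 1 = A + 3 by omega, show B + 2 + 1 = B + 3 by omega] at hh
      have e02 : tm (A + 4) = tm (B + 4) := by
        have hh := hz 2 (by omega)
        rwa [show A + 2 + 2 = A + 4 by omega, show B + 2 + 2 = B + 4 by omega] at hh
      have e03 : tm (A + 5) = tm (B + 5) := by
        have hh := hz 3 (by omega)
        rwa [show A + 2 + 3 = A + 5 by omega, show B + 2 + 3 = B + 5 by omega] at hh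
      have hz1 : tm (A + 3) = true := by
        have hp := pair_ne ε
        rw [show 2 * ε + 1 = B + 3 by omega, show 2 * ε = B + 2 by omega] at hp
        rw [← e00, hz0] at hp
        rw [e01]
        have := bool_flip hp
        rw [this]; rfl
      have hz2 : tm (A + 4) = false := by
        have hp := pair_ne (γ + 1)
        rw [show 2 * (γ + 1) + 1 = A + 4 by omega, show 2 * (γ + 1) = A + 3 by omega, hz1] at hp
        have := bool_flip hp
        rw [this]; rfl
      have hz3 : tm (A + 5) = true := by
        have hp := pair_ne (ε + 1)
        rw [show 2 * (ε + 1) + 1 = B + 5 by omega, show 2 * (ε + 1) = B + 4 by omega] at hp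
        rw [← e02, hz2] at hp
        rw [e03]
        have := bool_flip hp
        rw [this]; rfl
      have p0 : tm γ = true := by
        have hh := tm_even γ
        rw [show 2 * γ = A + 1 by omega, hA1] at hh
        exact hh.symm
      have p1 : tm (γ + 1) = true := by
        have hh := tm_even (γ + 1)
        rw [show 2 * (γ + 1) = A + 3 by omega, hz1] at hh
        exact hh.symm
      have p2 : tm (γ + 2) = true := by
        have hh := tm_even (γ + 2)
        rw [show 2 * (γ + 2) = A + 5 by omega, hz3] at hh
        exact hh.symm
      rcases no3 γ with hq | hq
      · exact hq (by rw [p0, p1])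
      · exact hq (by rw [p1, p2])
    · -- B+2 odd: z0 forced true on B side, contradiction with hz0
      have hp := pair_ne ε
      rw [show 2 * ε + 1 = B + 2 by omega, show 2 * ε = B + 1 by omega, hB1] at hp
      have e00 : tm (A + 2) = tm (B + 2) := by simpa using hz 0 (by omega)
      rw [← e00, hz0] at hp
      exact hp rfl
/-! ### factorAt lemmas -/

lemma factorAt_congr (i j n : ℕ) (h : ∀ r < n, tm (i + r) = tm (j + r)) :
    factorAt tm i n = factorAt tm j n := by
  unfold factorAt
  exact List.map_inj_left.mpr (fun r hr => h r (List.mem_range.mp hr))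

lemma factorAt_ext (i j n : ℕ) (h : factorAt tm i n = factorAt tm j n) :
    ∀ r < n, tm (i + r) = tm (j + r) := by
  intro r hr
  exact List.map_inj_left.mp h r (List.mem_range.mpr hr)

lemma factorAt_succ (x : ℕ → Bool) (i n : ℕ) :
    factorAt x i (n + 1) = x i :: factorAt x (i + 1) n := by
  simp only [factorAt, List.range_succ_eq_map, List.map_cons, List.map_map, Nat.add_zero]
  congr 1
  apply List.map_inj_left.mpr
  intro t _
  simp only [Function.comp_apply, Nat.succ_eq_add_one]
  congr 1
  omega

lemma mem_factorAt (x : ℕ → Bool) (i n r : ℕ) (h : r < n) : x (i + r) ∈ factorAt x i n := by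
  exact List.mem_map.mpr ⟨r, List.mem_range.mpr h, rfl⟩

lemma true_mem (v : List Bool) (a n : ℕ) (hn : 3 ≤ n) (hv : v = factorAt tm a n) :
    true ∈ v := by
  by_contra hc
  have hf : ∀ r < n, tm (a + r) = false := by
    intro r hr
    have hm := mem_factorAt tm a n r hr
    rw [← hv] at hm
    cases h : tm (a + r)
    · rfl
    · exact absurd (h ▸ hm) hc
  have h0 : tm a = false := by have := hf 0 (by omega); rwa [Nat.add_zero] at this
  have h1 : tm (a + 1) = false := hf 1 (by omega)
  have h2 : tm (a + 2) = false := hf 2 (by omega)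
  rcases no3 a with h | h
  · exact h (by rw [h0, h1])
  · exact h (by rw [h1, h2])

lemma exists_rep (v : List Bool) (h : true ∈ v) :
    ∃ p t, v = List.replicate p false ++ true :: t := by
  induction v with
  | nil => cases h
  | cons a l ih =>
    cases a
    · have h' : true ∈ l := by simpa using h
      obtain ⟨p, t, ht⟩ := ih h'
      exact ⟨p + 1, t, by rw [List.replicate_succ, List.cons_append, ht]⟩
    · exact ⟨0, l, rfl⟩

lemma erase_rep (p : ℕ) (t : List Bool) :
    (List.replicate p false ++ true :: t).erase true = List.replicate p false ++ t := by
  rw [List.erase_append_right _ (by simp), List.erase_cons_head]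

/-! ### The glue lemma -/

lemma glue (n e π a b i' j' L' : ℕ) (hn : 11 ≤ n) (he : 2 ≤ e) (hπ : 8 ≤ π)
    (hie : a + 2 = 2 ^ e * (i' + 1)) (hje : b + 2 = 2 ^ e * (j' + 1))
    (ha0 : tm a = true) (ha1 : tm (a + 1) = false)
    (hb0 : tm b = false) (hb1 : tm (b + 1) = true)
    (heq : ∀ r < n - 2, tm (a + 2 + r) = tm (b + 2 + r))
    (hword : ∀ q < L', tm (i' + 1 + q) = tm (π + q))
    (hlen : n - 2 ≤ L' * 2 ^ e) :
    factorAt tm a n = factorAt tm (2 ^ e * π - 2) n ∨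
    factorAt tm b n = factorAt tm (2 ^ e * π - 2) n := by
  have hE4 : 4 ≤ 2 ^ e := by
    calc (4:ℕ) = 2 ^ 2 := by norm_num
    _ ≤ 2 ^ e := Nat.pow_le_pow_right (by norm_num) he
  have h2e : (2:ℕ) ^ e = 2 * 2 ^ (e - 1) := by
    conv_lhs => rw [show e = (e - 1) + 1 by omega]
    rw [pow_succ]
    ring
  have h2X : 2 ^ e * π = 2 * (2 ^ (e - 1) * π) := by rw [h2e]; ring
  have hX1 : 8 ≤ 2 ^ (e - 1) * π := by
    have h1 : 1 ≤ (2:ℕ) ^ (e - 1) := Nat.one_le_two_pow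
    calc (8:ℕ) = 1 * 8 := by norm_num
    _ ≤ 2 ^ (e - 1) * π := Nat.mul_le_mul h1 hπ
  have hc0 : tm (2 ^ e * π - 2) = tm (2 ^ (e - 1) * π - 1) := by
    rw [show 2 ^ e * π - 2 = 2 * (2 ^ (e - 1) * π - 1) by omega, tm_even]
  have hc1 : tm (2 ^ e * π - 1) = !(tm (2 ^ (e - 1) * π - 1)) := by
    rw [show 2 ^ e * π - 1 = 2 * (2 ^ (e - 1) * π - 1) + 1 by omega, tm_odd]
  have htail : ∀ r, r < n - 2 → tm (a + 2 + r) = tm (2 ^ e * π + r) := by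
    intro r hr
    have hq : r / 2 ^ e < L' := by
      rw [Nat.div_lt_iff_lt_mul (by positivity)]
      omega
    calc tm (a + 2 + r) = tm (2 ^ e * (i' + 1) + r) := by rw [hie]
    _ = xor (tm (i' + 1 + r / 2 ^ e)) (tm (r % 2 ^ e)) := tm_split e (i' + 1) r
    _ = xor (tm (π + r / 2 ^ e)) (tm (r % 2 ^ e)) := by rw [hword _ hq]
    _ = tm (2 ^ e * π + r) := (tm_split e π r).symm
  cases hc : tm (2 ^ (e - 1) * π - 1)
  · right
    apply factorAt_congr
    intro r hr
    rcases Nat.lt_or_ge r 2 with h2 | h2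
    · interval_cases r
      · rw [Nat.add_zero, Nat.add_zero, hb0, hc0, hc]
      · rw [show 2 ^ e * π - 2 + 1 = 2 ^ e * π - 1 by omega, hb1, hc1, hc]
        rfl
    · have hr2 : r - 2 < n - 2 := by omega
      have hh := heq (r - 2) hr2
      have ht := htail (r - 2) hr2
      rw [show b + r = b + 2 + (r - 2) by omega, ← hh, ht,
        show 2 ^ e * π - 2 + r = 2 ^ e * π + (r - 2) by omega]
  · left
    apply factorAt_congr
    intro r hr
    rcases Nat.lt_or_ge r 2 with h2 | h2
    · interval_cases r
      · rw [Nat.add_zero, Nat.add_zero, ha0, hc0, hc]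
      · rw [show 2 ^ e * π - 2 + 1 = 2 ^ e * π - 1 by omega, ha1, hc1, hc]
        rfl
    · have hr2 : r - 2 < n - 2 := by omega
      have ht := htail (r - 2) hr2
      rw [show a + r = a + 2 + (r - 2) by omega, ht,
        show 2 ^ e * π - 2 + r = 2 ^ e * π + (r - 2) by omega]
/-! ### The core classification -/

set_option maxHeartbeats 1000000 in
lemma core (n m a b : ℕ) (hn : 11 ≤ n) (hm : m = Nat.log 2 (n - 3) + 1)
    (ha0 : tm a = true) (ha1 : tm (a + 1) = false)
    (hb0 : tm b = false) (hb1 : tm (b + 1) = true)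
    (heq : ∀ r < n - 2, tm (a + 2 + r) = tm (b + 2 + r)) :
    ((n - 3) / 2 ^ (m - 2) = 2 →
      (factorAt tm a n = factorAt tm (2 ^ (m + 1) - 2) n ∨
       factorAt tm a n = factorAt tm (2 ^ (m + 1) + 2 ^ (m - 1) - 2) n ∨
       factorAt tm a n = factorAt tm (2 ^ (m + 1) + 2 ^ (m - 1) + 2 ^ (m - 2) - 2) n ∨
       factorAt tm a n = factorAt tm (2 ^ (m + 1) + 2 ^ m - 2) n ∨
       factorAt tm b n = factorAt tm (2 ^ (m + 1) - 2) n ∨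
       factorAt tm b n = factorAt tm (2 ^ (m + 1) + 2 ^ (m - 1) - 2) n ∨
       factorAt tm b n = factorAt tm (2 ^ (m + 1) + 2 ^ (m - 1) + 2 ^ (m - 2) - 2) n ∨
       factorAt tm b n = factorAt tm (2 ^ (m + 1) + 2 ^ m - 2) n)) ∧
    ((n - 3) / 2 ^ (m - 2) = 3 →
      (factorAt tm a n = factorAt tm (2 ^ (m + 1) - 2) n ∨
       factorAt tm a n = factorAt tm (2 ^ (m + 1) + 2 ^ m - 2) n ∨
       factorAt tm b n = factorAt tm (2 ^ (m + 1) - 2) n ∨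
       factorAt tm b n = factorAt tm (2 ^ (m + 1) + 2 ^ m - 2) n)) := by
  obtain ⟨t8, t9, t10, t11, t12, t13, t14, t15⟩ := tm_vals
  have h8 : 8 ≤ n - 3 := by omega
  have hlb : 2 ^ (m - 1) ≤ n - 3 := by
    have hh := Nat.pow_log_le_self 2 (show n - 3 ≠ 0 by omega)
    rwa [show Nat.log 2 (n - 3) = m - 1 by omega] at hh
  have hub : n - 3 < 2 ^ m := by
    rw [hm]
    exact Nat.lt_pow_succ_log_self (by norm_num) _
  have hm4 : 4 ≤ m := by
    by_contra hcon
    push_neg at hcon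
    have hh : (2:ℕ) ^ m ≤ 2 ^ 3 := Nat.pow_le_pow_right (by norm_num) (by omega)
    have h3 : (2:ℕ) ^ 3 = 8 := by norm_num
    omega
  have hLS : LSpt (a + 1) (b + 1) (n - 2) := by
    constructor
    · rw [ha1, hb1]; simp
    · intro r hr
      have hh := heq r hr
      rwa [show a + 1 + 1 + r = a + 2 + r by omega, show b + 1 + 1 + r = b + 2 + r by omega]
  obtain ⟨e, i', j', L', hie, hje, hbase, hL34, hA, hB⟩ :=
    lspt_main (n - 2) (by omega) (a + 1) (b + 1) hLS
  rw [show a + 1 + 1 = a + 2 by omega] at hie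
  rw [show b + 1 + 1 = b + 2 by omega] at hje
  -- pin e = m - 2
  have hem : e = m - 2 := by
    have h1 : 2 ^ (e + 1) ≤ 2 ^ e * (L' - 1) := by
      have hx : (2:ℕ) ^ (e + 1) = 2 ^ e * 2 := by ring
      have hy : 2 ^ e * 2 ≤ 2 ^ e * (L' - 1) := Nat.mul_le_mul_left _ (by omega)
      omega
    have h2 : (2:ℕ) ^ (e + 1) < 2 ^ m := by omega
    have h3 : e + 1 < m := (Nat.pow_lt_pow_iff_right (by norm_num)).mp h2
    have h4 : L' * 2 ^ e ≤ 4 * 2 ^ e := Nat.mul_le_mul_right _ (by omega)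
    have h5 : (2:ℕ) ^ (m - 1) < 2 ^ (e + 2) := by
      have hx : (2:ℕ) ^ (e + 2) = 4 * 2 ^ e := by ring
      omega
    have h6 : m - 1 < e + 2 := (Nat.pow_lt_pow_iff_right (by norm_num)).mp h5
    omega
  subst hem
  -- power identities
  have hE8 : (2:ℕ) ^ (m + 1) = 2 ^ (m - 2) * 8 := by
    rw [show (8:ℕ) = 2 ^ 3 by norm_num, ← pow_add, show m - 2 + 3 = m + 1 by omega]
  have hE4 : (2:ℕ) ^ m = 2 ^ (m - 2) * 4 := by
    rw [show (4:ℕ) = 2 ^ 2 by norm_num, ← pow_add, show m - 2 + 2 = m by omega]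
  have hE2 : (2:ℕ) ^ (m - 1) = 2 ^ (m - 2) * 2 := by
    rw [show (2:ℕ) ^ (m - 1) = 2 ^ (m - 2) * 2 ^ 1 by rw [← pow_add]; congr 1; omega]
    norm_num
  have hEpos : 1 ≤ (2:ℕ) ^ (m - 2) := Nat.one_le_two_pow
  have hdm := Nat.div_add_mod (n - 3) (2 ^ (m - 2))
  have hmod : (n - 3) % 2 ^ (m - 2) < 2 ^ (m - 2) := Nat.mod_lt _ (by positivity)
  constructor
  · -- top bits 10 : L' = 3
    intro hcond
    rw [hcond] at hdm
    have hup : n - 3 < 3 * 2 ^ (m - 2) := by omega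
    have hL3 : L' = 3 := by
      rcases hL34 with h | h
      · exact h
      · exfalso
        rw [h] at hB
        norm_num at hB
        omega
    subst hL3
    have hx2 : tm (i' + 2) = !(tm (i' + 1)) := bool_flip (ne2 i' j' 3 (by omega) hbase)
    cases hxv : tm (i' + 1) <;> cases hzv : tm (i' + 3)
    · -- (false, false) → π = 10 → counter2
      have hword : ∀ q < 3, tm (i' + 1 + q) = tm (10 + q) := by
        intro q hq
        interval_cases q
        · rw [Nat.add_zero, hxv]; rw [show (10:ℕ) + 0 = 10 by omega, t10]
        · rw [show i' + 1 + 1 = i' + 2 by omega, hx2, hxv, show (10:ℕ) + 1 = 11 by omega, t11]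
          rfl
        · rw [show i' + 1 + 2 = i' + 3 by omega, hzv, show (10:ℕ) + 2 = 12 by omega, t12]
      have hg := glue n (m - 2) 10 a b i' j' 3 hn (by omega) (by omega) hie hje
        ha0 ha1 hb0 hb1 heq hword hA
      rw [show 2 ^ (m - 2) * 10 - 2 = 2 ^ (m + 1) + 2 ^ (m - 1) - 2 by omega] at hg
      rcases hg with h | h
      · exact Or.inr (Or.inl h)
      · exact Or.inr (Or.inr (Or.inr (Or.inr (Or.inr (Or.inl h)))))
    · -- (false, true) → π = 12 → counter4
      have hword : ∀ q < 3, tm (i' + 1 + q) = tm (12 + q) := by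
        intro q hq
        interval_cases q
        · rw [Nat.add_zero, hxv]; rw [show (12:ℕ) + 0 = 12 by omega, t12]
        · rw [show i' + 1 + 1 = i' + 2 by omega, hx2, hxv, show (12:ℕ) + 1 = 13 by omega, t13]
          rfl
        · rw [show i' + 1 + 2 = i' + 3 by omega, hzv, show (12:ℕ) + 2 = 14 by omega, t14]
      have hg := glue n (m - 2) 12 a b i' j' 3 hn (by omega) (by omega) hie hje
        ha0 ha1 hb0 hb1 heq hword hA
      rw [show 2 ^ (m - 2) * 12 - 2 = 2 ^ (m + 1) + 2 ^ m - 2 by omega] at hg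
      rcases hg with h | h
      · exact Or.inr (Or.inr (Or.inr (Or.inl h)))
      · exact Or.inr (Or.inr (Or.inr (Or.inr (Or.inr (Or.inr (Or.inr h))))))
    · -- (true, false) → π = 8 → counter1
      have hword : ∀ q < 3, tm (i' + 1 + q) = tm (8 + q) := by
        intro q hq
        interval_cases q
        · rw [Nat.add_zero, hxv]; rw [show (8:ℕ) + 0 = 8 by omega, t8]
        · rw [show i' + 1 + 1 = i' + 2 by omega, hx2, hxv, show (8:ℕ) + 1 = 9 by omega, t9]
          rfl
        · rw [show i' + 1 + 2 = i' + 3 by omega, hzv, show (8:ℕ) + 2 = 10 by omega, t10]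
      have hg := glue n (m - 2) 8 a b i' j' 3 hn (by omega) (by omega) hie hje
        ha0 ha1 hb0 hb1 heq hword hA
      rw [show 2 ^ (m - 2) * 8 - 2 = 2 ^ (m + 1) - 2 by omega] at hg
      rcases hg with h | h
      · exact Or.inl h
      · exact Or.inr (Or.inr (Or.inr (Or.inr (Or.inl h))))
    · -- (true, true) → π = 11 → counter3
      have hword : ∀ q < 3, tm (i' + 1 + q) = tm (11 + q) := by
        intro q hq
        interval_cases q
        · rw [Nat.add_zero, hxv]; rw [show (11:ℕ) + 0 = 11 by omega, t11]
        · rw [show i' + 1 + 1 = i' + 2 by omega, hx2, hxv, show (11:ℕ) + 1 = 12 by omega, t12]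
          rfl
        · rw [show i' + 1 + 2 = i' + 3 by omega, hzv, show (11:ℕ) + 2 = 13 by omega, t13]
      have hg := glue n (m - 2) 11 a b i' j' 3 hn (by omega) (by omega) hie hje
        ha0 ha1 hb0 hb1 heq hword hA
      rw [show 2 ^ (m - 2) * 11 - 2 = 2 ^ (m + 1) + 2 ^ (m - 1) + 2 ^ (m - 2) - 2 by omega] at hg
      rcases hg with h | h
      · exact Or.inr (Or.inr (Or.inl h))
      · exact Or.inr (Or.inr (Or.inr (Or.inr (Or.inr (Or.inr (Or.inl h))))))
  · -- top bits 11 : L' = 4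
    intro hcond
    rw [hcond] at hdm
    have hup : 3 * 2 ^ (m - 2) ≤ n - 3 := by omega
    have hL4 : L' = 4 := by
      rcases hL34 with h | h
      · exfalso
        rw [h] at hA
        omega
      · exact h
    subst hL4
    obtain ⟨hw2, hw3, hw4⟩ := base4 i' j' hbase
    cases hxv : tm (i' + 1)
    · -- x = false → π = 12 → counter4
      have hword : ∀ q < 4, tm (i' + 1 + q) = tm (12 + q) := by
        intro q hq
        interval_cases q
        · rw [Nat.add_zero, hxv]; rw [show (12:ℕ) + 0 = 12 by omega, t12]
        · rw [show i' + 1 + 1 = i' + 2 by omega, hw2, hxv, show (12:ℕ) + 1 = 13 by omega, t13]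
          rfl
        · rw [show i' + 1 + 2 = i' + 3 by omega, hw3, hxv, show (12:ℕ) + 2 = 14 by omega, t14]
          rfl
        · rw [show i' + 1 + 3 = i' + 4 by omega, hw4, hxv, show (12:ℕ) + 3 = 15 by omega, t15]
      have hg := glue n (m - 2) 12 a b i' j' 4 hn (by omega) (by omega) hie hje
        ha0 ha1 hb0 hb1 heq hword hA
      rw [show 2 ^ (m - 2) * 12 - 2 = 2 ^ (m + 1) + 2 ^ m - 2 by omega] at hg
      rcases hg with h | h
      · exact Or.inr (Or.inl h)
      · exact Or.inr (Or.inr (Or.inr h))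
    · -- x = true → π = 8 → counter1
      have hword : ∀ q < 4, tm (i' + 1 + q) = tm (8 + q) := by
        intro q hq
        interval_cases q
        · rw [Nat.add_zero, hxv]; rw [show (8:ℕ) + 0 = 8 by omega, t8]
        · rw [show i' + 1 + 1 = i' + 2 by omega, hw2, hxv, show (8:ℕ) + 1 = 9 by omega, t9]
          rfl
        · rw [show i' + 1 + 2 = i' + 3 by omega, hw3, hxv, show (8:ℕ) + 2 = 10 by omega, t10]
          rfl
        · rw [show i' + 1 + 3 = i' + 4 by omega, hw4, hxv, show (8:ℕ) + 3 = 11 by omega, t11]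
      have hg := glue n (m - 2) 8 a b i' j' 4 hn (by omega) (by omega) hie hje
        ha0 ha1 hb0 hb1 heq hword hA
      rw [show 2 ^ (m - 2) * 8 - 2 = 2 ^ (m + 1) - 2 by omega] at hg
      rcases hg with h | h
      · exact Or.inl h
      · exact Or.inr (Or.inr (Or.inl h))
/-! ### List-level reduction -/

lemma peel1 (x : ℕ → Bool) (i n : ℕ) (c : Bool) (rest : List Bool)
    (h : factorAt x i (n + 1) = c :: rest) : x i = c ∧ rest = factorAt x (i + 1) n := by
  rw [factorAt_succ] at h
  injection h with h1 h2
  exact ⟨h1, h2.symm⟩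

lemma replicate3 (k : ℕ) :
    List.replicate (k + 3) false = false :: false :: false :: List.replicate k false := by
  rw [show k + 3 = k + 1 + 1 + 1 by omega]
  simp [List.replicate_succ]

set_option maxHeartbeats 1000000 in
lemma finish (n m : ℕ) (hn : 11 ≤ n) (hm : m = Nat.log 2 (n - 3) + 1)
    (v w : List Bool) (a b p q : ℕ) (tv tw : List Bool)
    (hva : v = factorAt tm a n) (hwa : w = factorAt tm b n)
    (hvr : v = List.replicate p false ++ true :: tv)
    (hwr : w = List.replicate q false ++ true :: tw)
    (her : List.replicate p false ++ tv = List.replicate q false ++ tw)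
    (hpq : p < q) :
    ((n - 3) / 2 ^ (m - 2) = 2 →
      (v = factorAt tm (2 ^ (m + 1) - 2) n ∨
       v = factorAt tm (2 ^ (m + 1) + 2 ^ (m - 1) - 2) n ∨
       v = factorAt tm (2 ^ (m + 1) + 2 ^ (m - 1) + 2 ^ (m - 2) - 2) n ∨
       v = factorAt tm (2 ^ (m + 1) + 2 ^ m - 2) n ∨
       w = factorAt tm (2 ^ (m + 1) - 2) n ∨
       w = factorAt tm (2 ^ (m + 1) + 2 ^ (m - 1) - 2) n ∨
       w = factorAt tm (2 ^ (m + 1) + 2 ^ (m - 1) + 2 ^ (m - 2) - 2) n ∨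
       w = factorAt tm (2 ^ (m + 1) + 2 ^ m - 2) n)) ∧
    ((n - 3) / 2 ^ (m - 2) = 3 →
      (v = factorAt tm (2 ^ (m + 1) - 2) n ∨
       v = factorAt tm (2 ^ (m + 1) + 2 ^ m - 2) n ∨
       w = factorAt tm (2 ^ (m + 1) - 2) n ∨
       w = factorAt tm (2 ^ (m + 1) + 2 ^ m - 2) n)) := by
  have hq2 : q ≤ 2 := by
    by_contra hq3
    push_neg at hq3
    obtain ⟨q', rfl⟩ : ∃ q', q = q' + 3 := ⟨q - 3, by omega⟩
    obtain ⟨k, hk⟩ : ∃ k, n = k + 3 := ⟨n - 3, by omega⟩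
    have hw3 : factorAt tm b (k + 3) = false :: false :: false ::
        (List.replicate q' false ++ true :: tw) := by
      rw [← hk, ← hwa, hwr, replicate3]
      simp
    obtain ⟨hb0, hr1⟩ := peel1 tm b (k + 2) false _ hw3
    obtain ⟨hb1, hr2⟩ := peel1 tm (b + 1) (k + 1) false _ hr1.symm
    obtain ⟨hb2, _⟩ := peel1 tm (b + 1 + 1) k false _ hr2.symm
    rcases no3 b with h | h
    · exact h (by rw [hb0, hb1])
    · exact h (by rw [hb1, show b + 2 = b + 1 + 1 by omega, hb2])
  have hcases : p = 0 ∧ q = 1 ∨ p = 0 ∧ q = 2 ∨ p = 1 ∧ q = 2 := by omega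
  rcases hcases with ⟨hp, hq⟩ | ⟨hp, hq⟩ | ⟨hp, hq⟩
  · -- v = 10·tw , w = 01·tw
    subst hp hq
    simp only [List.replicate, List.nil_append, List.cons_append] at her hvr hwr
    -- her : tv = false :: tw ; hvr : v = true :: tv ; hwr : w = false :: true :: tw
    obtain ⟨k, hk⟩ : ∃ k, n = k + 2 := ⟨n - 2, by omega⟩
    have hv2 : factorAt tm a (k + 2) = true :: false :: tw := by
      rw [← hk, ← hva, hvr, her]
    have hw2 : factorAt tm b (k + 2) = false :: true :: tw := by
      rw [← hk, ← hwa, hwr]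
    obtain ⟨ha0, hr1⟩ := peel1 tm a (k + 1) true _ hv2
    obtain ⟨ha1, hr2⟩ := peel1 tm (a + 1) k false _ hr1.symm
    obtain ⟨hb0, hs1⟩ := peel1 tm b (k + 1) false _ hw2
    obtain ⟨hb1, hs2⟩ := peel1 tm (b + 1) k true _ hs1.symm
    have hfac : factorAt tm (a + 2) (n - 2) = factorAt tm (b + 2) (n - 2) := by
      rw [show a + 2 = a + 1 + 1 by omega, show b + 2 = b + 1 + 1 by omega,
        show n - 2 = k by omega, ← hr2, ← hs2]
    have heq := factorAt_ext _ _ _ hfac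
    obtain ⟨g1, g2⟩ := core n m a b hn hm ha0 ha1 hb0 hb1 heq
    rw [hva, hwa]
    exact ⟨g1, g2⟩
  · -- v = 100·tw , w = 001·tw : impossible
    exfalso
    subst hp hq
    simp only [List.replicate, List.nil_append, List.cons_append] at her hvr hwr
    -- her : tv = false :: false :: tw ; hvr : v = true :: tv ; hwr : w = false :: false :: true :: tw
    obtain ⟨k, hk⟩ : ∃ k, n = k + 3 := ⟨n - 3, by omega⟩
    have hv2 : factorAt tm a (k + 3) = true :: false :: false :: tw := by
      rw [← hk, ← hva, hvr, her]
    have hw2 : factorAt tm b (k + 3) = false :: false :: true :: tw := by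
      rw [← hk, ← hwa, hwr]
    obtain ⟨ha0, hr1⟩ := peel1 tm a (k + 2) true _ hv2
    obtain ⟨ha1, hr2⟩ := peel1 tm (a + 1) (k + 1) false _ hr1.symm
    obtain ⟨ha2, hr3⟩ := peel1 tm (a + 1 + 1) k false _ hr2.symm
    obtain ⟨hb0, hs1⟩ := peel1 tm b (k + 2) false _ hw2
    obtain ⟨hb1, hs2⟩ := peel1 tm (b + 1) (k + 1) false _ hs1.symm
    obtain ⟨hb2, hs3⟩ := peel1 tm (b + 1 + 1) k true _ hs2.symm
    have hfac : factorAt tm (a + 3) (n - 3) = factorAt tm (b + 3) (n - 3) := by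
      rw [show a + 3 = a + 1 + 1 + 1 by omega, show b + 3 = b + 1 + 1 + 1 by omega,
        show n - 3 = k by omega, ← hr3, ← hs3]
    have heq := factorAt_ext _ _ _ hfac
    exact killB n a b hn (by rwa [show a + 1 = a + 1 by rfl] at ha1)
      (by rwa [show a + 2 = a + 1 + 1 by omega]) hb0 hb1 heq
  · -- v = 010·tw , w = 001·tw : impossible
    exfalso
    subst hp hq
    simp only [List.replicate, List.nil_append, List.cons_append] at her hvr hwr
    -- her : false :: tv = false :: false :: tw ; hvr : v = false :: true :: tv
    have her2 : tv = false :: tw := by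
      injection her
    obtain ⟨k, hk⟩ : ∃ k, n = k + 3 := ⟨n - 3, by omega⟩
    have hv2 : factorAt tm a (k + 3) = false :: true :: false :: tw := by
      rw [← hk, ← hva, hvr, her2]
    have hw2 : factorAt tm b (k + 3) = false :: false :: true :: tw := by
      rw [← hk, ← hwa, hwr]
    obtain ⟨ha0, hr1⟩ := peel1 tm a (k + 2) false _ hv2
    obtain ⟨ha1, hr2⟩ := peel1 tm (a + 1) (k + 1) true _ hr1.symm
    obtain ⟨ha2, hr3⟩ := peel1 tm (a + 1 + 1) k false _ hr2.symm
    obtain ⟨hb0, hs1⟩ := peel1 tm b (k + 2) false _ hw2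
    obtain ⟨hb1, hs2⟩ := peel1 tm (b + 1) (k + 1) false _ hs1.symm
    obtain ⟨hb2, hs3⟩ := peel1 tm (b + 1 + 1) k true _ hs2.symm
    have hfac : factorAt tm (a + 3) (n - 3) = factorAt tm (b + 3) (n - 3) := by
      rw [show a + 3 = a + 1 + 1 + 1 by omega, show b + 3 = b + 1 + 1 + 1 by omega,
        show n - 3 = k by omega, ← hr3, ← hs3]
    have heq := factorAt_ext _ _ _ hfac
    exact killC n a b hn ha0 ha1 hb0 hb1 heq
lemma or_swap8 {A B C D E F G H : Prop} (h : A ∨ B ∨ C ∨ D ∨ E ∨ F ∨ G ∨ H) :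
    E ∨ F ∨ G ∨ H ∨ A ∨ B ∨ C ∨ D := by tauto

lemma or_swap4 {A B C D : Prop} (h : A ∨ B ∨ C ∨ D) : C ∨ D ∨ A ∨ B := by tauto

set_option maxHeartbeats 1000000 in
/-- let `n ≥ 11` and let `m` be the number of binary digits of `n - 3`,
so `n - 3 = [b₁ b₂ ⋯ b_m]₂` with `b₁ = 1` and `m = ⌊log₂(n-3)⌋ + 1`. Define the
four counterexample words `counterᵢ(n)` as the length-`n` factors of the Thue–Morse
word `t` starting at positions `2^(m+1) - 2`, `2^(m+1) + 2^(m-1) - 2`,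
`2^(m+1) + 2^(m-1) + 2^(m-2) - 2` and `2^(m+1) + 2^m - 2` respectively.
If `b₁b₂ = 10` (i.e. the top two binary digits of `n - 3` are `10`, i.e.
`(n-3) / 2^(m-2) = 2`) and `w` is a length-`n` factor of `t` admitting a distinct
tortoise-equivalent factor `v`, then `w` or `v` equals one of
`counter₁(n), …, counter₄(n)`; if `b₁b₂ = 11` (i.e. `(n-3) / 2^(m-2) = 3`), then
`w` or `v` equals `counter₁(n)` or `counter₄(n)`. -/
theorem stmt_9 (n : ℕ) (hn : 11 ≤ n) (m : ℕ) (hm : m = Nat.log 2 (n - 3) + 1)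
    (counter1 counter2 counter3 counter4 : List Bool)
    (hc1 : counter1 = factorAt tm (2 ^ (m + 1) - 2) n)
    (hc2 : counter2 = factorAt tm (2 ^ (m + 1) + 2 ^ (m - 1) - 2) n)
    (hc3 : counter3 = factorAt tm (2 ^ (m + 1) + 2 ^ (m - 1) + 2 ^ (m - 2) - 2) n)
    (hc4 : counter4 = factorAt tm (2 ^ (m + 1) + 2 ^ m - 2) n)
    (w v : List Bool)
    (hw : IsFactor tm w) (hwn : w.length = n)
    (hv : IsFactor tm v) (hvn : v.length = n)
    (hne : v ≠ w) (hteq : tortoise v = tortoise w) :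
    ((n - 3) / 2 ^ (m - 2) = 2 →
      (w = counter1 ∨ w = counter2 ∨ w = counter3 ∨ w = counter4 ∨
       v = counter1 ∨ v = counter2 ∨ v = counter3 ∨ v = counter4)) ∧
    ((n - 3) / 2 ^ (m - 2) = 3 →
      (w = counter1 ∨ w = counter4 ∨ v = counter1 ∨ v = counter4)) := by
  subst hc1 hc2 hc3 hc4
  obtain ⟨a, hva⟩ := hv
  obtain ⟨b, hwa⟩ := hw
  rw [hvn] at hva
  rw [hwn] at hwa
  have hva' : v = factorAt tm a n := hva
  have hwa' : w = factorAt tm b n := hwa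
  have htv : true ∈ v := true_mem v a n (by omega) hva'
  have htw : true ∈ w := true_mem w b n (by omega) hwa'
  simp only [tortoise] at hteq
  rw [if_pos htv, if_pos htw] at hteq
  have her : v.erase true = w.erase true := List.append_cancel_right hteq
  obtain ⟨p, tv, hvr⟩ := exists_rep v htv
  obtain ⟨q, tw, hwr⟩ := exists_rep w htw
  have her2 : List.replicate p false ++ tv = List.replicate q false ++ tw := by
    rw [hvr, hwr] at her
    rwa [erase_rep, erase_rep] at her
  rcases lt_trichotomy p q with hpq | hpq | hpq
  · obtain ⟨g1, g2⟩ := finish n m hn hm v w a b p q tv tw hva' hwa' hvr hwr her2 hpq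
    exact ⟨fun h => or_swap8 (g1 h), fun h => or_swap4 (g2 h)⟩
  · exfalso
    apply hne
    subst hpq
    have htvw : tv = tw := List.append_cancel_left her2
    rw [hvr, hwr, htvw]
  · obtain ⟨g1, g2⟩ := finish n m hn hm w v b a q p tw tv hwa' hva' hwr hvr her2.symm hpq
    exact ⟨g1, g2⟩
end
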